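/- Let T > 0 and μ > 0, let z₀ ∈ C([0,T];ℝ), let a be continuous on D₁ = {(t,s) : 0 ≤ s ≤ t ≤ T} and b continuous on D₂ = {(t,s,σ) : 0 ≤ s ≤ t, 0 ≤ σ ≤ t, t ≤ T}, with ā := max|a|, b̄ := max|b|. Set c₀ := ‖z₀‖_μ, α := ā(1 − e^{−μT})/μ, β := b̄(cosh(μT) − 1)/μ², and let φ(ξ) := βξ² + (α − 1)ξ + c₀ with largest real root r̄. Assume α < 1, c₀β ≤ (1/4)(α − 1)², and c₀ ≤ r̄. Then the scalar Riccati–Volterra integral equation z(t) = z₀(t) + ∫₀ᵗ a(t,s)z(s) ds + (1/2)∫₀ᵗ∫₀ᵗ b(t,s,σ)z(s)z(σ) ds dσ has a unique solution z ∈ C([0,T];ℝ) with ‖z‖_μ ≤ r̄. -/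

import Mathlib

open MeasureTheory Set

/-- The weighted norm `‖z‖_μ = max_{0 ≤ t ≤ T} e^{−μt}|z(t)|` on `C([0,T];ℝ)`. -/
noncomputable def wnorm (μ T : ℝ) (z : ℝ → ℝ) : ℝ :=
  sSup ((fun t => Real.exp (-(μ * t)) * |z t|) '' Icc 0 T)

/-!
Picard iteration in the weighted norm `‖·‖_μ`. Writing `Φ` for the right-hand side of the
equation, the kernel bounds give `‖Φ 0‖_μ ≤ c₀` and
`‖Φ u - Φ v‖_μ ≤ (α + β (‖u‖_μ + ‖v‖_μ)) ‖u - v‖_μ`. Hence, with the scalar comparison sequence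
`ρ₀ = 0`, `ρₙ₊₁ = c₀ + α ρₙ + β ρₙ²`, the iterates `uₙ = Φⁿ 0` satisfy `‖uₙ‖_μ ≤ ρₙ` and
`‖uₘ - uₙ‖_μ ≤ ρₘ - ρₙ` for `n ≤ m`. Since `φ(r̄) = 0` says that `r̄` is a fixed point of
`ρ ↦ c₀ + α ρ + β ρ²`, the sequence `ρₙ` increases to a limit `L ≤ r̄`, so the iterates converge
uniformly on `[0, T]` to a fixed point `z` of `Φ` with `‖z‖_μ ≤ L ≤ r̄`.

For uniqueness, two continuous solutions are bounded on `[0, T]`, and because the kernels only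
see `[0, t]`, `|z t - z' t| ≤ K ∫₀ᵗ |z - z'|`; Grönwall's inequality then gives `z = z'`.

The data `z₀`, `a`, `b` are first extended (Tietze) to continuous functions on the whole space,
so that all integrands are continuous.
-/

open Filter Topology

theorem exists_continuous_eqOn_of_isClosed {X : Type*} [TopologicalSpace X] [NormalSpace X]
    {s : Set X} (hs : IsClosed s) {f : X → ℝ} (hf : ContinuousOn f s) :
    ∃ g : X → ℝ, Continuous g ∧ EqOn g f s := by
  obtain ⟨g, hg⟩ := ContinuousMap.exists_restrict_eq hs ⟨s.domRestrict f, hf.domRestrict⟩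
  exact ⟨g, g.continuous, fun x hx => congr($hg ⟨x, hx⟩)⟩

namespace intervalIntegral

theorem abs_integral_le_of_abs_le {a b : ℝ} {f g : ℝ → ℝ} (hab : a ≤ b) (hg : Continuous g)
    (h : ∀ s ∈ Icc a b, |f s| ≤ g s) : |∫ s in a..b, f s| ≤ ∫ s in a..b, g s :=
  norm_integral_le_of_norm_le hab
    (ae_of_all _ fun s hs => (Real.norm_eq_abs _).trans_le <| h s (Ioc_subset_Icc_self hs))
    (hg.intervalIntegrable a b)

theorem abs_integral_integral_le {a b : ℝ} {F G : ℝ → ℝ → ℝ} (hab : a ≤ b)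
    (hG : Continuous (Function.uncurry G)) (h : ∀ s ∈ Icc a b, ∀ σ ∈ Icc a b, |F s σ| ≤ G s σ) :
    |∫ s in a..b, ∫ σ in a..b, F s σ| ≤ ∫ s in a..b, ∫ σ in a..b, G s σ :=
  abs_integral_le_of_abs_le hab (continuous_parametric_intervalIntegral_of_continuous' hG a b)
    fun s hs => abs_integral_le_of_abs_le hab (hG.uncurry_left s) (h s hs)

theorem integral_integral_sub {a b : ℝ} {F G : ℝ → ℝ → ℝ} (hF : Continuous (Function.uncurry F))
    (hG : Continuous (Function.uncurry G)) :
    (∫ s in a..b, ∫ σ in a..b, F s σ) - ∫ s in a..b, ∫ σ in a..b, G s σ =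
      ∫ s in a..b, ∫ σ in a..b, (F s σ - G s σ) := by
  rw [← integral_sub
    ((continuous_parametric_intervalIntegral_of_continuous' hF a b).intervalIntegrable a b)
    ((continuous_parametric_intervalIntegral_of_continuous' hG a b).intervalIntegrable a b)]
  refine integral_congr fun s _ => ?_
  exact (integral_sub ((hF.uncurry_left s).intervalIntegrable a b)
    ((hG.uncurry_left s).intervalIntegrable a b)).symm

theorem integral_integral_mul_add_mul {a b : ℝ} {f₁ g₁ f₂ g₂ : ℝ → ℝ} (hf₁ : Continuous f₁)
    (hg₁ : Continuous g₁) (hf₂ : Continuous f₂) (hg₂ : Continuous g₂) :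
    ∫ s in a..b, ∫ σ in a..b, (f₁ s * g₁ σ + f₂ s * g₂ σ) =
      (∫ s in a..b, f₁ s) * (∫ σ in a..b, g₁ σ) + (∫ s in a..b, f₂ s) * ∫ σ in a..b, g₂ σ := by
  have hint : ∀ {f : ℝ → ℝ}, Continuous f → IntervalIntegrable f volume a b :=
    fun hf => hf.intervalIntegrable a b
  calc _ = ∫ s in a..b, (f₁ s * ∫ σ in a..b, g₁ σ) + f₂ s * ∫ σ in a..b, g₂ σ :=
        integral_congr fun s _ => by
          rw [integral_add (hint (by fun_prop)) (hint (by fun_prop)), integral_const_mul,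
            integral_const_mul]
    _ = _ := by
        rw [integral_add (hint (by fun_prop)) (hint (by fun_prop)), integral_mul_const,
          integral_mul_const]

theorem abs_integral_mul_sub_le {a b K : ℝ} {k u v : ℝ → ℝ} (hab : a ≤ b) (hk : Continuous k)
    (hu : Continuous u) (hv : Continuous v) (hkK : ∀ s ∈ Icc a b, |k s| ≤ K) :
    |(∫ s in a..b, k s * u s) - ∫ s in a..b, k s * v s| ≤ K * ∫ s in a..b, |u s - v s| := by
  rw [← integral_sub (Continuous.intervalIntegrable (by fun_prop) _ _)
    (Continuous.intervalIntegrable (by fun_prop) _ _), ← integral_const_mul]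
  refine abs_integral_le_of_abs_le hab (by fun_prop) fun s hs => ?_
  rw [← mul_sub, abs_mul]
  exact mul_le_mul_of_nonneg_right (hkK s hs) (abs_nonneg _)

theorem abs_integral_integral_mul_sub_le {a b K : ℝ} {k : ℝ → ℝ → ℝ} {u v : ℝ → ℝ} (hab : a ≤ b)
    (hk : Continuous (Function.uncurry k)) (hu : Continuous u) (hv : Continuous v)
    (hkK : ∀ s ∈ Icc a b, ∀ σ ∈ Icc a b, |k s σ| ≤ K) :
    |(∫ s in a..b, ∫ σ in a..b, k s σ * u s * u σ) - ∫ s in a..b, ∫ σ in a..b, k s σ * v s * v σ| ≤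
      K * ((∫ s in a..b, |u s|) + ∫ s in a..b, |v s|) * ∫ s in a..b, |u s - v s| := by
  have hK : 0 ≤ K := (abs_nonneg _).trans (hkK a ⟨le_rfl, hab⟩ a ⟨le_rfl, hab⟩)
  rw [integral_integral_sub (by fun_prop) (by fun_prop)]
  calc _ ≤ ∫ s in a..b, ∫ σ in a..b, (K * |u s|) * |u σ - v σ| + (K * |u s - v s|) * |v σ| := by
        refine abs_integral_integral_le hab (by fun_prop) fun s hs σ hσ => ?_
        rw [show k s σ * u s * u σ - k s σ * v s * v σ =
          k s σ * (u s * (u σ - v σ) + (u s - v s) * v σ) by ring, abs_mul]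
        have hsplit : |u s * (u σ - v σ) + (u s - v s) * v σ| ≤
            |u s| * |u σ - v σ| + |u s - v s| * |v σ| := by
          simpa only [abs_mul] using abs_add_le (u s * (u σ - v σ)) ((u s - v s) * v σ)
        calc _ ≤ K * (|u s| * |u σ - v σ| + |u s - v s| * |v σ|) :=
              mul_le_mul (hkK s hs σ hσ) hsplit (abs_nonneg _) hK
          _ = _ := by ring
    _ = _ := by
        rw [integral_integral_mul_add_mul (by fun_prop) (by fun_prop) (by fun_prop)
          (by fun_prop), integral_const_mul, integral_const_mul]
        ring

end intervalIntegral

theorem eqOn_zero_of_abs_le_mul_integral {g : ℝ → ℝ} {L T : ℝ} (hg : Continuous g)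
    (h : ∀ t ∈ Icc 0 T, |g t| ≤ L * ∫ s in (0:ℝ)..t, |g s|) : EqOn g 0 (Icc 0 T) := by
  set F : ℝ → ℝ := fun t => ∫ s in (0:ℝ)..t, |g s|
  have hF : ∀ x, HasDerivAt F |g x| x := fun x =>
    intervalIntegral.integral_hasDerivAt_right (hg.abs.intervalIntegrable _ _)
      (hg.abs.stronglyMeasurableAtFilter _ _) hg.abs.continuousAt
  have hF_nonneg : ∀ x ∈ Icc 0 T, 0 ≤ F x := fun x hx =>
    intervalIntegral.integral_nonneg hx.1 fun s _ => abs_nonneg _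
  have hF_zero : ∀ x ∈ Icc 0 T, F x = 0 :=
    eq_zero_of_abs_deriv_le_mul_abs_self_of_eq_zero_right
      (fun x _ => (hF x).continuousAt.continuousWithinAt) (fun x _ => (hF x).hasDerivWithinAt)
      intervalIntegral.integral_same fun x hx => by
        rw [Real.norm_eq_abs, abs_abs, Real.norm_eq_abs,
          abs_of_nonneg (hF_nonneg x (Ico_subset_Icc_self hx))]
        exact h x (Ico_subset_Icc_self hx)
  intro t ht
  have hgt := h t ht
  rwa [show (∫ s in (0:ℝ)..t, |g s|) = 0 from hF_zero t ht, mul_zero, abs_nonpos_iff] at hgt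

/-- `WeightedBound μ T u p` is the bound `‖u‖_μ ≤ p`, stated pointwise. -/
def WeightedBound (μ T : ℝ) (u : ℝ → ℝ) (p : ℝ) : Prop :=
  ∀ t ∈ Icc 0 T, |u t| ≤ p * Real.exp (μ * t)

namespace WeightedBound

variable {μ T p q : ℝ} {u v : ℝ → ℝ}

theorem nonneg (h : WeightedBound μ T u p) (hT : 0 ≤ T) : 0 ≤ p := by
  simpa using (abs_nonneg _).trans (h 0 ⟨le_rfl, hT⟩)

theorem mono (h : WeightedBound μ T u p) (hpq : p ≤ q) : WeightedBound μ T u q :=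
  fun t ht => (h t ht).trans (mul_le_mul_of_nonneg_right hpq (Real.exp_pos _).le)

theorem add (hu : WeightedBound μ T u p) (hv : WeightedBound μ T v q) :
    WeightedBound μ T (u + v) (p + q) := fun t ht =>
  (abs_add_le _ _).trans ((add_le_add (hu t ht) (hv t ht)).trans_eq (add_mul _ _ _).symm)

theorem zero : WeightedBound μ T 0 0 := fun t _ => by simp

theorem wnorm_le (h : WeightedBound μ T u p) (hT : 0 ≤ T) : wnorm μ T u ≤ p := by
  refine csSup_le ((nonempty_Icc.2 hT).image _) ?_
  rintro _ ⟨t, ht, rfl⟩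
  dsimp only
  rw [Real.exp_neg, inv_mul_le_iff₀ (Real.exp_pos _), mul_comm]
  exact h t ht

end WeightedBound

theorem weightedBound_wnorm {μ T : ℝ} {u : ℝ → ℝ} (hu : ContinuousOn u (Icc 0 T)) :
    WeightedBound μ T u (wnorm μ T u) := fun t ht => by
  have hle : Real.exp (-(μ * t)) * |u t| ≤ wnorm μ T u :=
    le_csSup ((isCompact_Icc.image_of_continuousOn (by fun_prop)).bddAbove) (mem_image_of_mem _ ht)
  rwa [Real.exp_neg, inv_mul_le_iff₀ (Real.exp_pos _), mul_comm] at hle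

theorem integral_exp_mul {μ : ℝ} (hμ : μ ≠ 0) (t : ℝ) :
    ∫ s in (0:ℝ)..t, Real.exp (μ * s) = (Real.exp (μ * t) - 1) / μ := by
  rw [intervalIntegral.integral_comp_mul_left (fun x => Real.exp x) hμ, integral_exp]
  simp [div_eq_inv_mul]

theorem WeightedBound.integral_abs_le {μ T p t : ℝ} {u : ℝ → ℝ} (hμ : μ ≠ 0) (hu : Continuous u)
    (h : WeightedBound μ T u p) (ht : t ∈ Icc 0 T) :
    ∫ s in (0:ℝ)..t, |u s| ≤ p * ((Real.exp (μ * t) - 1) / μ) := by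
  rw [← integral_exp_mul hμ, ← intervalIntegral.integral_const_mul]
  exact intervalIntegral.integral_mono_on ht.1 (hu.abs.intervalIntegrable _ _)
    (Continuous.intervalIntegrable (by fun_prop) _ _) fun s hs => h s ⟨hs.1, hs.2.trans ht.2⟩

theorem exp_sub_one_div_le {μ T t : ℝ} (hμ : 0 < μ) (ht : t ∈ Icc 0 T) :
    (Real.exp (μ * t) - 1) / μ ≤ (1 - Real.exp (-(μ * T))) / μ * Real.exp (μ * t) := by
  rw [div_mul_eq_mul_div, sub_mul, one_mul, ← Real.exp_add]
  gcongr
  exact Real.exp_le_one_iff.2 (by nlinarith [ht.2])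

/-- The constant `β` comes from the identity `e⁻ˣ (eˣ - 1)² = 2 (cosh x - 1)`. -/
theorem sq_exp_sub_one_div_le {μ T t : ℝ} (hμ : 0 < μ) (ht : t ∈ Icc 0 T) :
    ((Real.exp (μ * t) - 1) / μ) ^ 2 ≤
      2 * ((Real.cosh (μ * T) - 1) / μ ^ 2) * Real.exp (μ * t) := by
  have hcosh : (Real.exp (μ * t) - 1) ^ 2 = 2 * (Real.cosh (μ * t) - 1) * Real.exp (μ * t) := by
    rw [Real.cosh_eq, Real.exp_neg]
    field_simp
    ring
  rw [div_pow, hcosh, mul_div_assoc', div_mul_eq_mul_div]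
  gcongr
  rw [Real.cosh_le_cosh, abs_of_nonneg (by nlinarith [ht.1]),
    abs_of_nonneg (by nlinarith [ht.1, ht.2])]
  nlinarith [ht.2]

def majorant (c α β : ℝ) (n : ℕ) : ℝ := (fun x => c + α * x + β * x ^ 2)^[n] 0

section Majorant

variable {c α β r : ℝ}

theorem majorant_zero : majorant c α β 0 = 0 := rfl

theorem majorant_succ (n : ℕ) :
    majorant c α β (n + 1) = c + α * majorant c α β n + β * majorant c α β n ^ 2 :=
  Function.iterate_succ_apply' _ n 0

theorem majorant_nonneg (hc : 0 ≤ c) (hα : 0 ≤ α) (hβ : 0 ≤ β) (n : ℕ) : 0 ≤ majorant c α β n := by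
  induction n with
  | zero => exact le_rfl
  | succ n ih => rw [majorant_succ]; positivity

theorem monotone_majorant (hc : 0 ≤ c) (hα : 0 ≤ α) (hβ : 0 ≤ β) : Monotone (majorant c α β) := by
  refine monotone_nat_of_le_succ fun n => ?_
  induction n with
  | zero => simpa [majorant_succ, majorant_zero] using hc
  | succ n ih =>
    rw [majorant_succ, majorant_succ (n + 1)]
    have := majorant_nonneg hc hα hβ n
    gcongr

theorem majorant_le (hc : 0 ≤ c) (hα : 0 ≤ α) (hβ : 0 ≤ β) (hr : c + α * r + β * r ^ 2 = r)
    (hr0 : 0 ≤ r) (n : ℕ) :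
    majorant c α β n ≤ r := by
  induction n with
  | zero => exact hr0
  | succ n ih =>
    rw [majorant_succ, ← hr]
    have := majorant_nonneg hc hα hβ n
    gcongr

end Majorant

theorem exists_continuous_weightedBound_sub_of_tendsto {μ T L : ℝ} (hT : 0 ≤ T) (hμ : 0 ≤ μ)
    {u : ℕ → ℝ → ℝ} (hu : ∀ n, Continuous (u n)) {ρ : ℕ → ℝ} (hρ : Monotone ρ)
    (hL : Tendsto ρ atTop (𝓝 L)) (h : ∀ n m, n ≤ m → WeightedBound μ T (u m - u n) (ρ m - ρ n)) :
    ∃ z : ℝ → ℝ, Continuous z ∧ ∀ n, WeightedBound μ T (z - u n) (L - ρ n) := by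
  have hρL : ∀ n, ρ n ≤ L := hρ.ge_of_tendsto hL
  let f : ℕ → C(Icc 0 T, ℝ) := fun n => ⟨fun x => u n x, (hu n).comp continuous_subtype_val⟩
  have hdist : ∀ n m, n ≤ m → dist (f n) (f m) ≤ (L - ρ n) * Real.exp (μ * T) := by
    intro n m hnm
    refine (ContinuousMap.dist_le (by nlinarith [hρL n, Real.exp_pos (μ * T)])).2 fun x => ?_
    rw [Real.dist_eq, abs_sub_comm]
    refine (h n m hnm x x.2).trans (mul_le_mul (by linarith [hρL m]) ?_ (Real.exp_pos _).le
      (by linarith [hρL n]))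
    exact Real.exp_le_exp.2 (mul_le_mul_of_nonneg_left x.2.2 hμ)
  have hgap : Tendsto (fun n => L - ρ n) atTop (𝓝 0) := by
    simpa using (tendsto_const_nhds (x := L)).sub hL
  obtain ⟨g, hg⟩ := cauchySeq_tendsto_of_complete <|
    cauchySeq_of_le_tendsto_0' _ hdist (by simpa using hgap.mul_const (Real.exp (μ * T)))
  refine ⟨IccExtend hT g, g.continuous.Icc_extend', fun n t ht => ?_⟩
  have hlim : Tendsto (fun m => |u m t - u n t|) atTop (𝓝 |(IccExtend hT g - u n) t|) := by
    rw [Pi.sub_apply, IccExtend_of_mem _ _ ht]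
    exact (((continuous_eval_const ⟨t, ht⟩).tendsto g).comp hg).sub_const _ |>.abs
  refine le_of_tendsto hlim (eventually_atTop.2 ⟨n, fun m hnm => ?_⟩)
  exact (h n m hnm t ht).trans
    (mul_le_mul_of_nonneg_right (by linarith [hρL m]) (Real.exp_pos _).le)

def WeightedLipschitz (μ T α β : ℝ) (Φ : (ℝ → ℝ) → ℝ → ℝ) : Prop :=
  ∀ u v p q d, Continuous u → Continuous v → WeightedBound μ T u p → WeightedBound μ T v q →
    WeightedBound μ T (u - v) d → WeightedBound μ T (Φ u - Φ v) ((α + β * (p + q)) * d)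

section Picard

variable {μ T c α β : ℝ} {Φ : (ℝ → ℝ) → ℝ → ℝ}

theorem continuous_iterate_apply_zero (hcont : ∀ u, Continuous u → Continuous (Φ u)) (n : ℕ) :
    Continuous (Φ^[n] 0) := by
  induction n with
  | zero => exact continuous_const
  | succ n ih => rw [Function.iterate_succ_apply']; exact hcont _ ih

theorem weightedBound_iterate_apply_zero (hcont : ∀ u, Continuous u → Continuous (Φ u))
    (h0 : WeightedBound μ T (Φ 0) c) (hΦ : WeightedLipschitz μ T α β Φ) (n : ℕ) :
    WeightedBound μ T (Φ^[n] 0) (majorant c α β n) := by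
  induction n with
  | zero => exact WeightedBound.zero
  | succ n ih =>
    have h := (hΦ _ 0 _ 0 _ (continuous_iterate_apply_zero hcont n) continuous_const ih
      WeightedBound.zero (by simpa using ih)).add h0
    rw [sub_add_cancel] at h
    rw [Function.iterate_succ_apply', majorant_succ]
    convert h using 1
    ring

theorem weightedBound_iterate_apply_zero_sub (hcont : ∀ u, Continuous u → Continuous (Φ u))
    (h0 : WeightedBound μ T (Φ 0) c) (hΦ : WeightedLipschitz μ T α β Φ) (n k : ℕ) :
    WeightedBound μ T (Φ^[n + k] 0 - Φ^[n] 0) (majorant c α β (n + k) - majorant c α β n) := by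
  induction n with
  | zero => simpa [majorant_zero] using weightedBound_iterate_apply_zero hcont h0 hΦ k
  | succ n ih =>
    rw [Nat.add_right_comm, Function.iterate_succ_apply', Function.iterate_succ_apply',
      majorant_succ, majorant_succ]
    convert hΦ _ _ _ _ _ (continuous_iterate_apply_zero hcont _)
      (continuous_iterate_apply_zero hcont n) (weightedBound_iterate_apply_zero hcont h0 hΦ _)
      (weightedBound_iterate_apply_zero hcont h0 hΦ n) ih using 1
    ring

theorem WeightedLipschitz.exists_fixedPoint {r : ℝ} (hΦ : WeightedLipschitz μ T α β Φ)
    (hT : 0 ≤ T) (hμ : 0 ≤ μ) (hα : 0 ≤ α) (hβ : 0 ≤ β)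
    (hcont : ∀ u, Continuous u → Continuous (Φ u)) (h0 : WeightedBound μ T (Φ 0) c) (hr0 : 0 ≤ r)
    (hr : c + α * r + β * r ^ 2 = r) :
    ∃ z : ℝ → ℝ, Continuous z ∧ WeightedBound μ T z r ∧ ∀ t ∈ Icc 0 T, Φ z t = z t := by
  have hc := h0.nonneg hT
  set ρ := majorant c α β
  have hmono : Monotone ρ := monotone_majorant hc hα hβ
  have hρr : ∀ n, ρ n ≤ r := majorant_le hc hα hβ hr hr0
  set L := ⨆ n, ρ n
  have hL : Tendsto ρ atTop (𝓝 L) := tendsto_atTop_ciSup hmono ⟨r, forall_mem_range.2 hρr⟩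
  obtain ⟨z, hz, hzρ⟩ := exists_continuous_weightedBound_sub_of_tendsto hT hμ
    (continuous_iterate_apply_zero hcont) hmono hL fun n m hnm => by
      obtain ⟨k, rfl⟩ := Nat.exists_eq_add_of_le hnm
      exact weightedBound_iterate_apply_zero_sub hcont h0 hΦ n k
  have hzL : WeightedBound μ T z L := fun t ht => by simpa [ρ, majorant_zero] using hzρ 0 t ht
  refine ⟨z, hz, hzL.mono (ciSup_le hρr), fun t ht => ?_⟩
  have hbound : ∀ n, |Φ z t - z t| ≤
      ((α + β * (L + ρ n)) * (L - ρ n) + (L - ρ (n + 1))) * Real.exp (μ * t) := fun n => by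
    have hstep := hΦ _ _ _ _ _ hz (continuous_iterate_apply_zero hcont n) hzL
      (weightedBound_iterate_apply_zero hcont h0 hΦ n) (hzρ n) t ht
    have hnext := hzρ (n + 1) t ht
    rw [Function.iterate_succ_apply', Pi.sub_apply, abs_sub_comm] at hnext
    calc |Φ z t - z t| ≤ |Φ z t - Φ (Φ^[n] 0) t| + |Φ (Φ^[n] 0) t - z t| := abs_sub_le _ _ _
      _ ≤ _ := add_le_add hstep hnext
      _ = _ := by ring
  have hgap : Tendsto (fun n => L - ρ n) atTop (𝓝 0) := by
    simpa using (tendsto_const_nhds (x := L)).sub hL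
  have hlim : Tendsto (fun n => ((α + β * (L + ρ n)) * (L - ρ n) + (L - ρ (n + 1))) *
      Real.exp (μ * t)) atTop (𝓝 0) := by
    simpa using (((tendsto_const_nhds.add (tendsto_const_nhds.mul
      (tendsto_const_nhds.add hL))).mul hgap).add (hgap.comp (tendsto_add_atTop_nat 1))).mul_const
      (Real.exp (μ * t))
  exact sub_eq_zero.1 (abs_nonpos_iff.1 (ge_of_tendsto' hlim hbound))

end Picard

namespace RiccatiVolterra

def D₁ (T : ℝ) : Set (ℝ × ℝ) := {p | 0 ≤ p.2 ∧ p.2 ≤ p.1 ∧ p.1 ≤ T}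

def D₂ (T : ℝ) : Set (ℝ × ℝ × ℝ) :=
  {p | 0 ≤ p.2.1 ∧ p.2.1 ≤ p.1 ∧ 0 ≤ p.2.2 ∧ p.2.2 ≤ p.1 ∧ p.1 ≤ T}

theorem isClosed_D₁ (T : ℝ) : IsClosed (D₁ T) := by
  simp only [D₁, ofPred_and]
  apply_rules [IsClosed.inter, isClosed_le] <;> fun_prop

theorem isClosed_D₂ (T : ℝ) : IsClosed (D₂ T) := by
  simp only [D₂, ofPred_and]
  apply_rules [IsClosed.inter, isClosed_le] <;> fun_prop

noncomputable def rhs (Z : ℝ → ℝ) (A : ℝ × ℝ → ℝ) (B : ℝ × ℝ × ℝ → ℝ) (u : ℝ → ℝ) (t : ℝ) : ℝ :=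
  Z t + (∫ s in (0:ℝ)..t, A (t, s) * u s) +
    (1/2) * ∫ s in (0:ℝ)..t, ∫ σ in (0:ℝ)..t, B (t, s, σ) * u s * u σ

variable {Z : ℝ → ℝ} {A : ℝ × ℝ → ℝ} {B : ℝ × ℝ × ℝ → ℝ} {u v : ℝ → ℝ} {T a' b' : ℝ}

theorem continuous_rhs (hZ : Continuous Z) (hA : Continuous A) (hB : Continuous B)
    (hu : Continuous u) : Continuous (rhs Z A B u) := by
  unfold rhs
  fun_prop

theorem abs_rhs_sub_rhs_le (hA : Continuous A) (hB : Continuous B)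
    (hu : Continuous u) (hv : Continuous v) (hAbd : ∀ p ∈ D₁ T, |A p| ≤ a')
    (hBbd : ∀ p ∈ D₂ T, |B p| ≤ b') {t : ℝ} (ht : t ∈ Icc 0 T) :
    |rhs Z A B u t - rhs Z A B v t| ≤
      (a' + b' / 2 * ((∫ s in (0:ℝ)..t, |u s|) + ∫ s in (0:ℝ)..t, |v s|)) *
        ∫ s in (0:ℝ)..t, |u s - v s| := by
  have hlin := intervalIntegral.abs_integral_mul_sub_le ht.1 (by fun_prop) hu hv
    fun s hs => hAbd (t, s) ⟨hs.1, hs.2, ht.2⟩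
  have hquad := intervalIntegral.abs_integral_integral_mul_sub_le (k := fun s σ => B (t, s, σ))
    ht.1 (by fun_prop) hu hv fun s hs σ hσ => hBbd (t, s, σ) ⟨hs.1, hs.2, hσ.1, hσ.2, ht.2⟩
  calc |rhs Z A B u t - rhs Z A B v t|
      = |((∫ s in (0:ℝ)..t, A (t, s) * u s) - ∫ s in (0:ℝ)..t, A (t, s) * v s) + 1 / 2 *
          ((∫ s in (0:ℝ)..t, ∫ σ in (0:ℝ)..t, B (t, s, σ) * u s * u σ) -
            ∫ s in (0:ℝ)..t, ∫ σ in (0:ℝ)..t, B (t, s, σ) * v s * v σ)| := by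
        congr 1
        unfold rhs
        ring
    _ ≤ _ := by
        refine (abs_add_le _ _).trans ?_
        rw [abs_mul, abs_of_pos (one_half_pos (α := ℝ))]
        linarith

theorem weightedLipschitz_rhs {μ : ℝ} (hμ : 0 < μ) (hA : Continuous A) (hB : Continuous B)
    (hAbd : ∀ p ∈ D₁ T, |A p| ≤ a') (hBbd : ∀ p ∈ D₂ T, |B p| ≤ b') :
    WeightedLipschitz μ T (a' * ((1 - Real.exp (-(μ * T))) / μ))
      (b' * ((Real.cosh (μ * T) - 1) / μ ^ 2)) (rhs Z A B) := by
  intro u v p q d hu hv hup hvq huv t ht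
  have hT : 0 ≤ T := ht.1.trans ht.2
  have ha' : 0 ≤ a' := (abs_nonneg _).trans (hAbd (0, 0) ⟨le_rfl, le_rfl, hT⟩)
  have hb' : 0 ≤ b' := (abs_nonneg _).trans (hBbd (0, 0, 0) ⟨le_rfl, le_rfl, le_rfl, le_rfl, hT⟩)
  have hp := hup.nonneg hT
  have hq := hvq.nonneg hT
  have hd := huv.nonneg hT
  set E := (Real.exp (μ * t) - 1) / μ
  have hE : 0 ≤ E := div_nonneg (by simpa using Real.one_le_exp (by nlinarith [ht.1])) hμ.le
  have hU := hup.integral_abs_le hμ.ne' hu ht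
  have hV := hvq.integral_abs_le hμ.ne' hv ht
  have hJ := huv.integral_abs_le hμ.ne' (hu.sub hv) ht
  have hJ0 : 0 ≤ ∫ s in (0:ℝ)..t, |u s - v s| :=
    intervalIntegral.integral_nonneg ht.1 fun s _ => abs_nonneg _
  have h1 := exp_sub_one_div_le hμ ht
  have h2 := sq_exp_sub_one_div_le hμ ht
  calc |rhs Z A B u t - rhs Z A B v t|
      ≤ (a' + b' / 2 * ((∫ s in (0:ℝ)..t, |u s|) + ∫ s in (0:ℝ)..t, |v s|)) *
        ∫ s in (0:ℝ)..t, |u s - v s| := abs_rhs_sub_rhs_le hA hB hu hv hAbd hBbd ht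
    _ ≤ (a' + b' / 2 * ((p + q) * E)) * (d * E) := by
        gcongr
        · linarith
        · exact hJ
    _ = a' * d * E + b' / 2 * ((p + q) * d) * E ^ 2 := by ring
    _ ≤ a' * d * ((1 - Real.exp (-(μ * T))) / μ * Real.exp (μ * t)) +
        b' / 2 * ((p + q) * d) * (2 * ((Real.cosh (μ * T) - 1) / μ ^ 2) * Real.exp (μ * t)) := by
        gcongr
    _ = _ := by ring

theorem abs_rhs_sub_rhs_le_integral {M : ℝ} (hA : Continuous A) (hB : Continuous B)
    (hu : Continuous u) (hv : Continuous v) (hAbd : ∀ p ∈ D₁ T, |A p| ≤ a')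
    (hBbd : ∀ p ∈ D₂ T, |B p| ≤ b') (huM : ∀ s ∈ Icc 0 T, |u s| ≤ M)
    (hvM : ∀ s ∈ Icc 0 T, |v s| ≤ M) {t : ℝ} (ht : t ∈ Icc 0 T) :
    |rhs Z A B u t - rhs Z A B v t| ≤ (a' + b' * M * T) * ∫ s in (0:ℝ)..t, |u s - v s| := by
  have hT : 0 ≤ T := ht.1.trans ht.2
  have hb' : 0 ≤ b' := (abs_nonneg _).trans (hBbd (0, 0, 0) ⟨le_rfl, le_rfl, le_rfl, le_rfl, hT⟩)
  have hM : 0 ≤ M := (abs_nonneg _).trans (huM 0 ⟨le_rfl, hT⟩)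
  have hint : ∀ {w : ℝ → ℝ}, Continuous w → (∀ s ∈ Icc 0 T, |w s| ≤ M) →
      ∫ s in (0:ℝ)..t, |w s| ≤ M * T := fun hw hwM => by
    calc _ ≤ ∫ s in (0:ℝ)..t, M :=
          intervalIntegral.integral_mono_on ht.1 (hw.abs.intervalIntegrable _ _)
            intervalIntegrable_const fun s hs => hwM s ⟨hs.1, hs.2.trans ht.2⟩
      _ ≤ M * T := by simpa [mul_comm] using mul_le_mul_of_nonneg_left ht.2 hM
  have hJ0 : 0 ≤ ∫ s in (0:ℝ)..t, |u s - v s| :=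
    intervalIntegral.integral_nonneg ht.1 fun s _ => abs_nonneg _
  have hUV : b' / 2 * ((∫ s in (0:ℝ)..t, |u s|) + ∫ s in (0:ℝ)..t, |v s|) ≤ b' * M * T := by
    nlinarith [hint hu huM, hint hv hvM]
  exact (abs_rhs_sub_rhs_le hA hB hu hv hAbd hBbd ht).trans
    (mul_le_mul_of_nonneg_right (by linarith) hJ0)

theorem rhs_zero : rhs Z A B 0 = Z := by
  funext t
  simp [rhs]

theorem rhs_congr {Z' : ℝ → ℝ} {A' : ℝ × ℝ → ℝ} {B' : ℝ × ℝ × ℝ → ℝ} {t : ℝ}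
    (hZ : EqOn Z Z' (Icc 0 T)) (hA : EqOn A A' (D₁ T)) (hB : EqOn B B' (D₂ T))
    (huv : EqOn u v (Icc 0 T)) (ht : t ∈ Icc 0 T) : rhs Z A B u t = rhs Z' A' B' v t := by
  have hmem : ∀ s ∈ uIcc 0 t, 0 ≤ s ∧ s ≤ t := fun s hs => by rwa [uIcc_of_le ht.1] at hs
  refine congrArg₂ (· + ·) (congrArg₂ (· + ·) (hZ ht) ?_) (congrArg _ ?_)
  · refine intervalIntegral.integral_congr fun s hs => ?_
    obtain ⟨hs0, hst⟩ := hmem s hs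
    rw [hA (show (t, s) ∈ D₁ T from ⟨hs0, hst, ht.2⟩), huv ⟨hs0, hst.trans ht.2⟩]
  · refine intervalIntegral.integral_congr fun s hs =>
      intervalIntegral.integral_congr fun σ hσ => ?_
    obtain ⟨hs0, hst⟩ := hmem s hs
    obtain ⟨hσ0, hσt⟩ := hmem σ hσ
    rw [hB (show (t, s, σ) ∈ D₂ T from ⟨hs0, hst, hσ0, hσt, ht.2⟩), huv ⟨hs0, hst.trans ht.2⟩,
      huv ⟨hσ0, hσt.trans ht.2⟩]

theorem exists_rhs_eq_self {μ c r : ℝ} (hT : 0 ≤ T) (hμ : 0 < μ) (hZ : Continuous Z)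
    (hA : Continuous A) (hB : Continuous B) (hAbd : ∀ p ∈ D₁ T, |A p| ≤ a')
    (hBbd : ∀ p ∈ D₂ T, |B p| ≤ b') (hZc : WeightedBound μ T Z c) (hr0 : 0 ≤ r)
    (hr : c + a' * ((1 - Real.exp (-(μ * T))) / μ) * r +
      b' * ((Real.cosh (μ * T) - 1) / μ ^ 2) * r ^ 2 = r) :
    ∃ z : ℝ → ℝ, Continuous z ∧ WeightedBound μ T z r ∧ ∀ t ∈ Icc 0 T, rhs Z A B z t = z t := by
  have ha' : 0 ≤ a' := (abs_nonneg _).trans (hAbd (0, 0) ⟨le_rfl, le_rfl, hT⟩)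
  have hb' : 0 ≤ b' := (abs_nonneg _).trans (hBbd (0, 0, 0) ⟨le_rfl, le_rfl, le_rfl, le_rfl, hT⟩)
  have hα : 0 ≤ (1 - Real.exp (-(μ * T))) / μ :=
    div_nonneg (sub_nonneg.2 (Real.exp_le_one_iff.2 (by nlinarith))) hμ.le
  have hβ : 0 ≤ (Real.cosh (μ * T) - 1) / μ ^ 2 :=
    div_nonneg (sub_nonneg.2 (Real.one_le_cosh _)) (sq_nonneg _)
  refine (weightedLipschitz_rhs hμ hA hB hAbd hBbd).exists_fixedPoint hT hμ.le
    (mul_nonneg ha' hα) (mul_nonneg hb' hβ) (fun u hu => continuous_rhs hZ hA hB hu) ?_ hr0 hr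
  rwa [rhs_zero]

theorem eqOn_of_rhs_eq_self (hA : Continuous A) (hB : Continuous B) (hu : Continuous u)
    (hv : Continuous v) (hAbd : ∀ p ∈ D₁ T, |A p| ≤ a') (hBbd : ∀ p ∈ D₂ T, |B p| ≤ b')
    (hufix : ∀ t ∈ Icc 0 T, rhs Z A B u t = u t) (hvfix : ∀ t ∈ Icc 0 T, rhs Z A B v t = v t) :
    EqOn u v (Icc 0 T) := by
  obtain ⟨Mu, hMu⟩ := isCompact_Icc.exists_bound_of_continuousOn hu.continuousOn
  obtain ⟨Mv, hMv⟩ := isCompact_Icc.exists_bound_of_continuousOn hv.continuousOn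
  have hzero := eqOn_zero_of_abs_le_mul_integral (hu.sub hv) fun t ht => by
    rw [Pi.sub_apply, ← hufix t ht, ← hvfix t ht]
    exact abs_rhs_sub_rhs_le_integral hA hB hu hv hAbd hBbd
      (fun s hs => (hMu s hs).trans (le_max_left Mu Mv))
      (fun s hs => (hMv s hs).trans (le_max_right Mu Mv)) ht
  exact fun t ht => sub_eq_zero.1 (hzero ht)

end RiccatiVolterra

theorem riccati_volterra_existence_uniqueness_general
    (T μ : ℝ) (hT : 0 < T) (hμ : 0 < μ)
    (z₀ : ℝ → ℝ) (hz₀ : ContinuousOn z₀ (Icc 0 T))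
    (a : ℝ → ℝ → ℝ)
    (hacont : ContinuousOn (fun p : ℝ × ℝ => a p.1 p.2)
      {p : ℝ × ℝ | 0 ≤ p.2 ∧ p.2 ≤ p.1 ∧ p.1 ≤ T})
    (b : ℝ → ℝ → ℝ → ℝ)
    (hbcont : ContinuousOn (fun p : ℝ × ℝ × ℝ => b p.1 p.2.1 p.2.2)
      {p : ℝ × ℝ × ℝ | 0 ≤ p.2.1 ∧ p.2.1 ≤ p.1 ∧ 0 ≤ p.2.2 ∧ p.2.2 ≤ p.1 ∧ p.1 ≤ T})
    (abar : ℝ)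
    (habar : IsGreatest ((fun p : ℝ × ℝ => |a p.1 p.2|) ''
      {p : ℝ × ℝ | 0 ≤ p.2 ∧ p.2 ≤ p.1 ∧ p.1 ≤ T}) abar)
    (bbar : ℝ)
    (hbbar : IsGreatest ((fun p : ℝ × ℝ × ℝ => |b p.1 p.2.1 p.2.2|) ''
      {p : ℝ × ℝ × ℝ | 0 ≤ p.2.1 ∧ p.2.1 ≤ p.1 ∧ 0 ≤ p.2.2 ∧ p.2.2 ≤ p.1 ∧ p.1 ≤ T}) bbar)
    (c₀ α β : ℝ)
    (hc₀ : c₀ = wnorm μ T z₀)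
    (hα : α = abar * ((1 - Real.exp (-(μ * T))) / μ))
    (hβ : β = bbar * ((Real.cosh (μ * T) - 1) / μ ^ 2))
    (rbar : ℝ)
    (hroot : β * rbar ^ 2 + (α - 1) * rbar + c₀ = 0)
    (hc₀le : c₀ ≤ rbar) :
    ∃ z : ℝ → ℝ,
      (ContinuousOn z (Icc 0 T) ∧ wnorm μ T z ≤ rbar ∧
        ∀ t ∈ Icc (0:ℝ) T,
          z t = z₀ t + (∫ s in (0:ℝ)..t, a t s * z s) +
            (1/2) * ∫ s in (0:ℝ)..t, ∫ σ in (0:ℝ)..t, b t s σ * z s * z σ) ∧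
      ∀ z' : ℝ → ℝ,
        (ContinuousOn z' (Icc 0 T) ∧ wnorm μ T z' ≤ rbar ∧
          ∀ t ∈ Icc (0:ℝ) T,
            z' t = z₀ t + (∫ s in (0:ℝ)..t, a t s * z' s) +
              (1/2) * ∫ s in (0:ℝ)..t, ∫ σ in (0:ℝ)..t, b t s σ * z' s * z' σ) →
        ∀ t ∈ Icc (0:ℝ) T, z' t = z t := by
  obtain ⟨Z, hZ, hZeq⟩ := exists_continuous_eqOn_of_isClosed isClosed_Icc hz₀
  obtain ⟨A, hA, hAeq⟩ := exists_continuous_eqOn_of_isClosed (RiccatiVolterra.isClosed_D₁ T) hacont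
  obtain ⟨B, hB, hBeq⟩ := exists_continuous_eqOn_of_isClosed (RiccatiVolterra.isClosed_D₂ T) hbcont
  have hAbd : ∀ p ∈ RiccatiVolterra.D₁ T, |A p| ≤ abar := fun p hp => by
    rw [hAeq hp]; exact habar.2 (mem_image_of_mem _ hp)
  have hBbd : ∀ p ∈ RiccatiVolterra.D₂ T, |B p| ≤ bbar := fun p hp => by
    rw [hBeq hp]; exact hbbar.2 (mem_image_of_mem _ hp)
  have hZc₀ : WeightedBound μ T Z c₀ := fun t ht => by
    rw [hZeq ht, hc₀]; exact weightedBound_wnorm hz₀ t ht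
  have hsol : ∀ {u y : ℝ → ℝ}, EqOn u y (Icc 0 T) → ∀ t ∈ Icc 0 T, RiccatiVolterra.rhs Z A B u t =
      RiccatiVolterra.rhs z₀ (fun p => a p.1 p.2) (fun p => b p.1 p.2.1 p.2.2) y t :=
    fun huy _ ht => RiccatiVolterra.rhs_congr hZeq hAeq hBeq huy ht
  obtain ⟨z, hz, hzr, hfix⟩ := RiccatiVolterra.exists_rhs_eq_self hT.le hμ hZ hA hB hAbd hBbd hZc₀
    ((hZc₀.nonneg hT.le).trans hc₀le) (by rw [← hα, ← hβ]; linear_combination hroot)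
  refine ⟨z, ⟨hz.continuousOn, hzr.wnorm_le hT.le, fun t ht => ?_⟩, ?_⟩
  · exact (hfix t ht).symm.trans (hsol (eqOn_refl _ _) t ht)
  rintro z' ⟨hz', -, hz'eq⟩ t ht
  obtain ⟨w, hw, hweq⟩ := exists_continuous_eqOn_of_isClosed isClosed_Icc hz'
  have hwfix : ∀ t ∈ Icc 0 T, RiccatiVolterra.rhs Z A B w t = w t := fun t ht =>
    (hsol hweq t ht).trans ((hz'eq t ht).symm.trans (hweq ht).symm)
  rw [← hweq ht]
  exact RiccatiVolterra.eqOn_of_rhs_eq_self hA hB hw hz hAbd hBbd hwfix hfix ht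

/-- (Theorem 6.1) Under the conditions of Lemma 6.1, the scalar
Riccati–Volterra equation
`z(t) = z₀(t) + ∫₀ᵗ a(t,s)z(s)ds + (1/2)∫₀ᵗ∫₀ᵗ b(t,s,σ)z(s)z(σ)ds dσ`
has a unique continuous solution with `‖z‖_μ ≤ r̄`. -/
theorem riccati_volterra_existence_uniqueness
    (T μ : ℝ) (hT : 0 < T) (hμ : 0 < μ)
    (z₀ : ℝ → ℝ) (hz₀ : ContinuousOn z₀ (Icc 0 T))
    (a : ℝ → ℝ → ℝ)
    (hacont : ContinuousOn (fun p : ℝ × ℝ => a p.1 p.2)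
      {p : ℝ × ℝ | 0 ≤ p.2 ∧ p.2 ≤ p.1 ∧ p.1 ≤ T})
    (b : ℝ → ℝ → ℝ → ℝ)
    (hbcont : ContinuousOn (fun p : ℝ × ℝ × ℝ => b p.1 p.2.1 p.2.2)
      {p : ℝ × ℝ × ℝ | 0 ≤ p.2.1 ∧ p.2.1 ≤ p.1 ∧ 0 ≤ p.2.2 ∧ p.2.2 ≤ p.1 ∧ p.1 ≤ T})
    (abar : ℝ)
    (habar : IsGreatest ((fun p : ℝ × ℝ => |a p.1 p.2|) ''
      {p : ℝ × ℝ | 0 ≤ p.2 ∧ p.2 ≤ p.1 ∧ p.1 ≤ T}) abar)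
    (bbar : ℝ)
    (hbbar : IsGreatest ((fun p : ℝ × ℝ × ℝ => |b p.1 p.2.1 p.2.2|) ''
      {p : ℝ × ℝ × ℝ | 0 ≤ p.2.1 ∧ p.2.1 ≤ p.1 ∧ 0 ≤ p.2.2 ∧ p.2.2 ≤ p.1 ∧ p.1 ≤ T}) bbar)
    (c₀ α β : ℝ)
    (hc₀ : c₀ = wnorm μ T z₀)
    (hα : α = abar * ((1 - Real.exp (-(μ * T))) / μ))
    (hβ : β = bbar * ((Real.cosh (μ * T) - 1) / μ ^ 2))
    (rbar : ℝ)
    (hroot : β * rbar ^ 2 + (α - 1) * rbar + c₀ = 0)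
    (hlargest : ∀ ξ : ℝ, β * ξ ^ 2 + (α - 1) * ξ + c₀ = 0 → ξ ≤ rbar)
    (hαlt : α < 1) (hdisc : c₀ * β ≤ (1/4) * (α - 1) ^ 2) (hc₀le : c₀ ≤ rbar) :
    ∃ z : ℝ → ℝ,
      (ContinuousOn z (Icc 0 T) ∧ wnorm μ T z ≤ rbar ∧
        ∀ t ∈ Icc (0:ℝ) T,
          z t = z₀ t + (∫ s in (0:ℝ)..t, a t s * z s) +
            (1/2) * ∫ s in (0:ℝ)..t, ∫ σ in (0:ℝ)..t, b t s σ * z s * z σ) ∧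
      ∀ z' : ℝ → ℝ,
        (ContinuousOn z' (Icc 0 T) ∧ wnorm μ T z' ≤ rbar ∧
          ∀ t ∈ Icc (0:ℝ) T,
            z' t = z₀ t + (∫ s in (0:ℝ)..t, a t s * z' s) +
              (1/2) * ∫ s in (0:ℝ)..t, ∫ σ in (0:ℝ)..t, b t s σ * z' s * z' σ) →
        ∀ t ∈ Icc (0:ℝ) T, z' t = z t :=
  riccati_volterra_existence_uniqueness_general T μ hT hμ z₀ hz₀ a hacont b hbcont abar habar bbar
    hbbar c₀ α β hc₀ hα hβ rbar hroot hc₀le
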